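/- Let σ ∈ S_{m+1} be a permutation of full support whose unique left descent is s_1. Then σ = s_1 s_2 ⋯ s_m, the ascending Coxeter element. -/

import Mathlib

/-!
Coxeter length in `S_{m+1}` is the number of inversions, so the left descents of `σ` are the
`c` with `σ⁻¹ (c + 1) < σ⁻¹ c`. Every letter `c` of a reduced word forces an inversion across
the cut between `c` and `c + 1`; for `s_m`, present by full support, this means that `σ` moves
the last point. Hence `σ⁻¹` is increasing on `1, …, m` and does not fix `m`, which leaves only
`σ⁻¹ i = i - 1` (mod `m + 1`): `σ` is the rotation `finRotate`, and so is the product `s_1 s_2 ⋯ s_m`.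
-/

/-- The support of `w`: the set of simple reflection indices appearing in some
(equivalently, any) reduced word for `w`. -/
def CoxeterSystem.supp {B W : Type*} [Group W] {M : CoxeterMatrix B}
    (cs : CoxeterSystem M W) (w : W) : Set B :=
  { i | ∃ ω : List B, cs.IsReduced ω ∧ cs.wordProd ω = w ∧ i ∈ ω }

open Equiv

namespace Fin

theorem cycleRange_succ {n : ℕ} (i : Fin n) :
    cycleRange i.succ = cycleRange i.castSucc * swap i.castSucc i.succ := by
  ext x
  simp only [Perm.mul_apply, swap_apply_def]
  rw [cycleRange_apply, cycleRange_apply]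
  simp only [Fin.lt_def, Fin.ext_iff, Fin.val_succ, Fin.val_castSucc]
  split_ifs <;> simp_all [Fin.val_add_one, Fin.ext_iff] <;> omega

theorem prod_map_swap_take_finRange {n : ℕ} (k : Fin (n + 1)) :
    (((List.finRange n).map fun i => swap i.castSucc i.succ).take k).prod = cycleRange k := by
  induction k using Fin.induction with
  | zero => simp
  | succ i ih => simp_all [List.take_add_one, cycleRange_succ]

theorem prod_map_swap_finRange (n : ℕ) :
    ((List.finRange n).map fun i => swap i.castSucc i.succ).prod = finRotate (n + 1) := by
  simpa [List.take_of_length_le] using prod_map_swap_take_finRange (last n)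

theorem swap_castSucc_succ_lt_swap_castSucc_succ_iff {n : ℕ} {c : Fin n} {x y : Fin (n + 1)}
    (h₁ : (x, y) ≠ (c.castSucc, c.succ)) (h₂ : (x, y) ≠ (c.succ, c.castSucc)) :
    swap c.castSucc c.succ x < swap c.castSucc c.succ y ↔ x < y := by
  simp only [ne_eq, Prod.mk.injEq, Fin.ext_iff, Fin.val_succ, Fin.val_castSucc] at h₁ h₂
  simp only [swap_apply_def, Fin.lt_def, Fin.ext_iff, Fin.val_succ, Fin.val_castSucc]
  split_ifs <;> simp_all <;> omega

theorem swap_castSucc_succ_le_castSucc_iff {n : ℕ} {c j : Fin n} (h : j ≠ c) (x : Fin (n + 1)) :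
    swap j.castSucc j.succ x ≤ c.castSucc ↔ x ≤ c.castSucc := by
  rw [Ne, Fin.ext_iff] at h
  simp only [swap_apply_def, Fin.le_def, Fin.ext_iff, Fin.val_succ, Fin.val_castSucc]
  split_ifs <;> simp_all <;> omega

end Fin

namespace Equiv.Perm

section LinearOrder

variable {α : Type*} [LinearOrder α] [Fintype α]

def inversions (σ : Perm α) : Finset (α × α) := {p | p.1 < p.2 ∧ σ p.2 < σ p.1}

def numInversions (σ : Perm α) : ℕ := σ.inversions.card

@[simp]
theorem mem_inversions {σ : Perm α} {p : α × α} :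
    p ∈ σ.inversions ↔ p.1 < p.2 ∧ σ p.2 < σ p.1 := by
  simp [inversions]

@[simp]
theorem numInversions_one : (1 : Perm α).numInversions = 0 := by
  simpa [numInversions, Finset.eq_empty_iff_forall_notMem] using fun (a b : α) h => h.le

end LinearOrder

variable {n : ℕ}

theorem exists_descent_of_ne_one {σ : Perm (Fin (n + 1))} (hσ : σ ≠ 1) :
    ∃ c : Fin n, σ c.succ < σ c.castSucc := by
  by_contra! hasc
  refine hσ (Equiv.ext fun x => (StrictMono.apply_eq ?_ : σ x = x))
  exact Fin.strictMono_iff_lt_succ.2 fun c =>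
    (hasc c).lt_of_ne (σ.injective.ne c.castSucc_lt_succ.ne)

theorem numInversions_mul_swap_of_lt {σ : Perm (Fin (n + 1))} {c : Fin n}
    (h : σ c.castSucc < σ c.succ) :
    (σ * swap c.castSucc c.succ).numInversions = σ.numInversions + 1 := by
  set t := swap c.castSucc c.succ
  have key : (σ * t).inversions =
      insert (c.castSucc, c.succ) (σ.inversions.map (t.prodCongr t).toEmbedding) := by
    ext ⟨x, y⟩
    simp only [mem_inversions, Finset.mem_insert, Finset.mem_map_equiv, prodCongr_symm, t,
      symm_swap, prodCongr_apply, Prod.map, Perm.mul_apply]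
    by_cases h₁ : (x, y) = (c.castSucc, c.succ)
    · simp_all [Prod.ext_iff, c.castSucc_lt_succ]
    by_cases h₂ : (x, y) = (c.succ, c.castSucc)
    · simp_all [Prod.ext_iff, lt_asymm h]
    simp [h₁, Fin.swap_castSucc_succ_lt_swap_castSucc_succ_iff h₁ h₂]
  rw [numInversions, key, Finset.card_insert_of_notMem, Finset.card_map]
  · rfl
  · simp [t, lt_asymm c.castSucc_lt_succ]

theorem numInversions_mul_swap_of_gt {σ : Perm (Fin (n + 1))} {c : Fin n}
    (h : σ c.succ < σ c.castSucc) :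
    (σ * swap c.castSucc c.succ).numInversions + 1 = σ.numInversions := by
  have := numInversions_mul_swap_of_lt (σ := σ * swap c.castSucc c.succ) (c := c) (by simpa using h)
  rw [mul_swap_mul_self] at this
  exact this.symm

theorem numInversions_mul_swap_le (σ : Perm (Fin (n + 1))) (c : Fin n) :
    (σ * swap c.castSucc c.succ).numInversions ≤ σ.numInversions + 1 := by
  rcases lt_or_gt_of_ne (σ.injective.ne c.castSucc_lt_succ.ne) with h | h
  · exact (numInversions_mul_swap_of_lt h).le
  · have := numInversions_mul_swap_of_gt h
    omega

theorem eq_finRotate_of_inv_lt_of_apply_last_ne {σ : Perm (Fin (n + 2))}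
    (hasc : ∀ c : Fin (n + 1), c ≠ 0 → σ⁻¹ c.castSucc < σ⁻¹ c.succ)
    (hlast : σ (Fin.last _) ≠ Fin.last _) : σ = finRotate (n + 2) := by
  have hmono : StrictMono fun i : Fin (n + 1) => σ⁻¹ i.succ :=
    Fin.strictMono_iff_lt_succ.2 fun i => by
      simpa only [Fin.succ_castSucc] using hasc i.succ i.succ_ne_zero
  have hmono_last : σ⁻¹ (Fin.last n).succ ≠ Fin.last _ := by
    rw [Ne, Fin.succ_last, Perm.inv_eq_iff_eq]
    exact hlast.symm
  have hne_last (i : Fin (n + 1)) : σ⁻¹ i.succ ≠ Fin.last _ :=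
    ((hmono.monotone (Fin.le_last i)).trans_lt (Fin.lt_last_iff_ne_last.2 hmono_last)).ne
  have hσ (i : Fin (n + 1)) : σ i.castSucc = i.succ := by
    have := (show StrictMono fun i => (σ⁻¹ i.succ).castPred (hne_last i) from
      fun a b hab => Fin.castPred_lt_castPred_iff.2 (hmono hab)).apply_eq (x := i)
    rw [Fin.castPred_eq_iff_eq_castSucc, Perm.inv_eq_iff_eq] at this
    exact this.symm
  ext1 x
  induction x using Fin.lastCases with
  | cast i => simp [hσ]
  | last =>
    rw [finRotate_last]
    induction h : σ (Fin.last _) using Fin.cases with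
    | zero => rfl
    | succ j =>
      rw [← hσ, σ.injective.eq_iff] at h
      exact absurd h (Fin.castSucc_lt_last j).ne'

end Equiv.Perm

namespace CoxeterSystem

open Perm

variable {m : ℕ} {M : CoxeterMatrix (Fin m)} {cs : CoxeterSystem M (Perm (Fin (m + 1)))}
  (hs : ∀ i : Fin m, cs.simple i = swap i.castSucc i.succ)
include hs

theorem length_le_numInversions (σ : Perm (Fin (m + 1))) : cs.length σ ≤ σ.numInversions := by
  by_cases hσ : σ = 1
  · simp [hσ]
  obtain ⟨c, hc⟩ := exists_descent_of_ne_one hσ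
  have hlt := numInversions_mul_swap_of_gt hc
  have ih := length_le_numInversions (σ * swap c.castSucc c.succ)
  calc cs.length σ = cs.length (σ * cs.simple c * cs.simple c) := by
        rw [simple_mul_simple_cancel_right]
    _ ≤ cs.length (σ * cs.simple c) + 1 := by
        simpa using cs.length_mul_le (σ * cs.simple c) (cs.simple c)
    _ ≤ σ.numInversions := by rw [hs]; omega
termination_by σ.numInversions
decreasing_by omega

theorem numInversions_le_length (σ : Perm (Fin (m + 1))) : σ.numInversions ≤ cs.length σ := by
  by_cases hσ : σ = 1
  · simp [hσ]
  obtain ⟨c, hc⟩ := cs.exists_rightDescent_of_ne_one hσ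
  have hlen := cs.isRightDescent_iff.1 hc
  have ih := numInversions_le_length (σ * cs.simple c)
  calc σ.numInversions = (σ * cs.simple c * cs.simple c).numInversions := by
        rw [simple_mul_simple_cancel_right]
    _ ≤ (σ * cs.simple c).numInversions + 1 := by
        rw [hs c]; exact numInversions_mul_swap_le _ c
    _ ≤ cs.length σ := by omega
termination_by cs.length σ
decreasing_by omega

theorem length_eq_numInversions (σ : Perm (Fin (m + 1))) : cs.length σ = σ.numInversions :=
  (length_le_numInversions hs σ).antisymm (numInversions_le_length hs σ)

theorem isRightDescent_iff_apply_succ_lt (σ : Perm (Fin (m + 1))) (c : Fin m) :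
    cs.IsRightDescent σ c ↔ σ c.succ < σ c.castSucc := by
  rw [IsRightDescent, hs, length_eq_numInversions hs, length_eq_numInversions hs]
  rcases lt_or_gt_of_ne (σ.injective.ne c.castSucc_lt_succ.ne) with h | h
  · have := numInversions_mul_swap_of_lt h
    simp only [this, lt_asymm h, iff_false]
    omega
  · have := numInversions_mul_swap_of_gt h
    simp only [h, iff_true]
    omega

theorem isLeftDescent_iff_inv_apply_succ_lt (σ : Perm (Fin (m + 1))) (c : Fin m) :
    cs.IsLeftDescent σ c ↔ σ⁻¹ c.succ < σ⁻¹ c.castSucc := by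
  rw [← isRightDescent_inv_iff, isRightDescent_iff_apply_succ_lt hs]

/-- The last letter `j` of a reduced word is an ascent of the preceding prefix, so appending it
creates the inversion `(j, j + 1)`; a letter `j ≠ c` preserves both sides of the cut at `c`. -/
theorem exists_inversion_across_of_mem {ω : List (Fin m)} (hω : cs.IsReduced ω) {c : Fin m}
    (hc : c ∈ ω) :
    ∃ x y, x ≤ c.castSucc ∧ c.castSucc < y ∧ cs.wordProd ω y < cs.wordProd ω x := by
  induction ω using List.reverseRecOn with
  | nil => simp at hc
  | append_singleton ω j ih =>
    have hprod : cs.wordProd (ω ++ [j]) = cs.wordProd ω * cs.simple j := by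
      rw [wordProd_append, wordProd_singleton]
    have hnot : ¬cs.IsRightDescent (cs.wordProd ω) j := by
      intro hdesc
      have := cs.length_wordProd_le ω
      rw [IsRightDescent, ← hprod, hω.eq, List.length_append, List.length_singleton] at hdesc
      omega
    rw [isRightDescent_iff_apply_succ_lt hs, not_lt] at hnot
    have hasc := hnot.lt_of_ne ((cs.wordProd ω).injective.ne j.castSucc_lt_succ.ne)
    rw [hprod, hs]
    obtain rfl | hjc := eq_or_ne j c
    · exact ⟨j.castSucc, j.succ, le_rfl, j.castSucc_lt_succ, by simpa using hasc⟩
    have hω' : cs.IsReduced ω := by simpa using hω.take ω.length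
    obtain ⟨x, y, hx, hy, hxy⟩ := ih hω' (by simpa [hjc.symm] using hc)
    refine ⟨swap j.castSucc j.succ x, swap j.castSucc j.succ y,
      (Fin.swap_castSucc_succ_le_castSucc_iff hjc x).2 hx, ?_, by simpa using hxy⟩
    rw [← not_le, Fin.swap_castSucc_succ_le_castSucc_iff hjc, not_le]
    exact hy

theorem wordProd_finRange : cs.wordProd (List.finRange m) = finRotate (m + 1) := by
  simpa only [wordProd, show cs.simple = _ from funext hs] using Fin.prod_map_swap_finRange m

end CoxeterSystem

/-- A permutation in `S_{m+1}` of full support whose unique left descent is the first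
simple reflection `s_1` is the ascending Coxeter element `s_1 s_2 ⋯ s_m`. -/
theorem stmt_2 {m : ℕ} (hm : 1 ≤ m)
    (cs : CoxeterSystem (CoxeterMatrix.Aₙ m) (Equiv.Perm (Fin (m + 1))))
    (hs : ∀ i : Fin m, cs.simple i = Equiv.swap i.castSucc i.succ)
    (σ : Equiv.Perm (Fin (m + 1)))
    (hfull : cs.supp σ = Set.univ)
    (huniq : ∀ i : Fin m, cs.IsLeftDescent σ i → i = ⟨0, by omega⟩) :
    σ = cs.wordProd (List.finRange m) := by
  obtain ⟨n, rfl⟩ : ∃ n, m = n + 1 := ⟨m - 1, by omega⟩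
  have hlast : σ (Fin.last _) ≠ Fin.last _ := by
    obtain ⟨ω, hω, rfl, hmem⟩ : Fin.last n ∈ cs.supp σ := hfull ▸ Set.mem_univ _
    obtain ⟨x, y, -, hy, hxy⟩ := cs.exists_inversion_across_of_mem hs hω hmem
    rw [Fin.castSucc_lt_iff_succ_le, Fin.succ_last, Fin.last_le_iff] at hy
    exact hy ▸ (hxy.trans_le (Fin.le_last _)).ne
  rw [cs.wordProd_finRange hs]
  refine Perm.eq_finRotate_of_inv_lt_of_apply_last_ne (fun c hc => ?_) hlast
  have hc' : ¬cs.IsLeftDescent σ c := mt (huniq c) (by simpa using hc)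
  rw [cs.isLeftDescent_iff_inv_apply_succ_lt hs, not_lt] at hc'
  exact hc'.lt_of_ne (σ⁻¹.injective.ne c.castSucc_lt_succ.ne)
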